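/- (Assembled error bound for rapid prediction.) Let H be a real inner product space, Φ : ℝ^d → H a feature map with kernel k(x, y) = ⟨Φ(x), Φ(y)⟩, let s_1^G, …, s_N^G ∈ ℝ^d be grid points with V = span{Φ(s_1^G), …, Φ(s_N^G)} (a complete subspace) and orthogonal projection P_V, and define the approximate kernel k_approx(x, s) = ⟨Φ(x), P_V Φ(s)⟩. Then for any prediction location s ∈ ℝ^d, observation locations s_1^O, …, s_n^O ∈ ℝ^d and coefficients c ∈ ℝ^n, the rapid prediction error satisfies |ĝ_approx(s) − ĝ(s)| = |Σ_{i=1}^n (k_approx(s, s_i^O) − k(s, s_i^O)) c_i| ≤ dist(Φ(s), V) · (max_{1 ≤ i ≤ n} dist(Φ(s_i^O), V)) · Σ_{i=1}^n |c_i|; i.e. the prediction error is bounded by the power function at s, times the largest power function value over the observation locations, times the ℓ¹-norm of the coefficients. -/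

import Mathlib

/-!
Since `P_V Φ(s)` is orthogonal to the residual `Φ(t) - P_V Φ(t)`, the kernel error is
`k_approx(s, t) - k(s, t) = -⟪Φ(s) - P_V Φ(s), Φ(t) - P_V Φ(t)⟫`, and the residual norms are the
distances to `V`. Cauchy–Schwarz bounds each term by the product of the power functions, and the
triangle inequality for the weighted sum gives the `ℓ¹` factor.
-/

open scoped RealInnerProductSpace InnerProductSpace

namespace Submodule

variable {𝕜 E : Type*} [RCLike 𝕜] [NormedAddCommGroup E] [InnerProductSpace 𝕜 E]
  (K : Submodule 𝕜 E) [K.HasOrthogonalProjection]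

theorem infDist_eq_norm_sub_starProjection (x : E) :
    Metric.infDist x (K : Set E) = ‖x - K.starProjection x‖ := by
  simp only [Metric.infDist_eq_iInf, starProjection_minimal, dist_eq_norm]
  rfl

theorem inner_starProjection_sub_inner (x y : E) :
    ⟪x, K.starProjection y⟫_𝕜 - ⟪x, y⟫_𝕜 = -⟪x - K.starProjection x, y - K.starProjection y⟫_𝕜 := by
  have h : ⟪K.starProjection x, y - K.starProjection y⟫_𝕜 = 0 :=
    K.sub_starProjection_mem_orthogonal y _ (K.starProjection_apply_mem x)
  rw [inner_sub_left, h, inner_sub_right]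
  ring

theorem norm_inner_starProjection_sub_inner_le (x y : E) :
    ‖⟪x, K.starProjection y⟫_𝕜 - ⟪x, y⟫_𝕜‖
      ≤ Metric.infDist x (K : Set E) * Metric.infDist y (K : Set E) := by
  rw [inner_starProjection_sub_inner, norm_neg, infDist_eq_norm_sub_starProjection,
    infDist_eq_norm_sub_starProjection]
  exact norm_inner_le_norm _ _

end Submodule

theorem Finset.abs_sum_mul_le_of_abs_le {ι : Type*} (s : Finset ι) {a c : ι → ℝ} {B : ℝ}
    (h : ∀ i ∈ s, |a i| ≤ B) : |∑ i ∈ s, a i * c i| ≤ B * ∑ i ∈ s, |c i| := by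
  calc |∑ i ∈ s, a i * c i| ≤ ∑ i ∈ s, |a i| * |c i| := by
        simpa only [abs_mul] using Finset.abs_sum_le_sum_abs (fun i => a i * c i) s
    _ ≤ ∑ i ∈ s, B * |c i| :=
        Finset.sum_le_sum fun i hi => mul_le_mul_of_nonneg_right (h i hi) (abs_nonneg _)
    _ = B * ∑ i ∈ s, |c i| := (Finset.mul_sum _ _ _).symm

theorem rapid_prediction_assembled_error_bound_general
    {H : Type*} [NormedAddCommGroup H] [InnerProductSpace ℝ H]
    {d n : ℕ} (hn : 0 < n)
    (Φ : (Fin d → ℝ) → H)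
    (k : (Fin d → ℝ) → (Fin d → ℝ) → ℝ)
    (hk : ∀ x y, k x y = ⟪Φ x, Φ y⟫)
    (V : Submodule ℝ H)
    [CompleteSpace V]
    (kapprox : (Fin d → ℝ) → (Fin d → ℝ) → ℝ)
    (hkapprox : ∀ x s, kapprox x s = ⟪Φ x, (V.orthogonalProjectionOnto (Φ s) : H)⟫)
    (s : Fin d → ℝ) (sO : Fin n → (Fin d → ℝ)) (c : Fin n → ℝ) :
    (|(∑ i, kapprox s (sO i) * c i) - ∑ i, k s (sO i) * c i|
        = |∑ i, (kapprox s (sO i) - k s (sO i)) * c i|)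
    ∧ |(∑ i, kapprox s (sO i) * c i) - ∑ i, k s (sO i) * c i|
        ≤ Metric.infDist (Φ s) (V : Set H)
          * (Finset.univ.sup' ⟨⟨0, hn⟩, Finset.mem_univ _⟩
              fun i => Metric.infDist (Φ (sO i)) (V : Set H))
          * ∑ i, |c i| := by
  have hsum : (∑ i, kapprox s (sO i) * c i) - ∑ i, k s (sO i) * c i
      = ∑ i, (kapprox s (sO i) - k s (sO i)) * c i := by
    simp only [← Finset.sum_sub_distrib, sub_mul]
  refine ⟨by rw [hsum], hsum ▸ Finset.abs_sum_mul_le_of_abs_le _ fun i _ => ?_⟩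
  calc |kapprox s (sO i) - k s (sO i)|
      ≤ Metric.infDist (Φ s) (V : Set H) * Metric.infDist (Φ (sO i)) (V : Set H) := by
        simpa only [hkapprox, hk, ← Submodule.starProjection_apply, Real.norm_eq_abs]
          using V.norm_inner_starProjection_sub_inner_le (Φ s) (Φ (sO i))
    _ ≤ _ := mul_le_mul_of_nonneg_left
        (Finset.le_sup' (fun j => Metric.infDist (Φ (sO j)) (V : Set H)) (Finset.mem_univ i))
        Metric.infDist_nonneg

/-- Assembled error bound for rapid prediction: with kernel
`k(x,y) = ⟨Φ(x), Φ(y)⟩` for a feature map `Φ`, `V` the span of the grid feature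
vectors with orthogonal projection `P_V`, and approximate kernel
`k_approx(x,s) = ⟨Φ(x), P_V Φ(s)⟩`, the rapid prediction error satisfies
`|ĝ_approx(s) − ĝ(s)| ≤ dist(Φ(s), V) · max_i dist(Φ(s_i^O), V) · Σ_i |c_i|`. -/
theorem rapid_prediction_assembled_error_bound
    {H : Type*} [NormedAddCommGroup H] [InnerProductSpace ℝ H]
    {d n N : ℕ} (hn : 0 < n)
    (Φ : (Fin d → ℝ) → H)
    (k : (Fin d → ℝ) → (Fin d → ℝ) → ℝ)
    (hk : ∀ x y, k x y = ⟪Φ x, Φ y⟫)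
    (sG : Fin N → (Fin d → ℝ))
    (V : Submodule ℝ H) (hV : V = Submodule.span ℝ (Set.range fun q => Φ (sG q)))
    [CompleteSpace V]
    (kapprox : (Fin d → ℝ) → (Fin d → ℝ) → ℝ)
    (hkapprox : ∀ x s, kapprox x s = ⟪Φ x, (V.orthogonalProjectionOnto (Φ s) : H)⟫)
    (s : Fin d → ℝ) (sO : Fin n → (Fin d → ℝ)) (c : Fin n → ℝ) :
    (|(∑ i, kapprox s (sO i) * c i) - ∑ i, k s (sO i) * c i|
        = |∑ i, (kapprox s (sO i) - k s (sO i)) * c i|)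
    ∧ |(∑ i, kapprox s (sO i) * c i) - ∑ i, k s (sO i) * c i|
        ≤ Metric.infDist (Φ s) (V : Set H)
          * (Finset.univ.sup' ⟨⟨0, hn⟩, Finset.mem_univ _⟩
              fun i => Metric.infDist (Φ (sO i)) (V : Set H))
          * ∑ i, |c i| :=
  rapid_prediction_assembled_error_bound_general hn Φ k hk V kapprox hkapprox s sO c
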